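/- arXiv:0907.2165 — 7 statements merged into one kernel-verified Lean document; each statement's English description precedes it below -/
import Mathlib

section
/- In a tournament, if a vertex v is contained in no directed triangle, then the tournament T has a feedback arc set of size at most k if and only if T with v deleted has a feedback arc set of size at most k. -/
/-- A tournament: irreflexive, and exactly one arc between every pair of distinct vertices. -/
def IsTournament {V : Type*} (r : V → V → Prop) : Prop :=
  (∀ v, ¬ r v v) ∧ ∀ u v : V, u ≠ v → (r u v ↔ ¬ r v u)

/-- A digraph (given by its arc relation) is acyclic: no directed cycle. -/
def Acyclic {V : Type*} (r : V → V → Prop) : Prop :=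
  ∀ v, ¬ Relation.TransGen r v v

/-!
Deleting a set of arcs `F` of `T - v` from `T` leaves `v` on no cycle: since `v` lies in no
directed triangle, every out-neighbour of an out-neighbour of `v` is again an out-neighbour of
`v`, so no path leaving `v` can return to it. Hence every cycle of `T` minus `F` avoids `v` and
is a cycle of `T - v` minus `F`. Conversely, a feedback arc set of `T` restricts to one of `T - v`.
-/

open Relation

section Acyclic

theorem Acyclic.of_map {V W : Type*} {r : V → V → Prop} {s : W → W → Prop} (hr : Acyclic r)
    (f : W → V) (hf : ∀ a b, s a b → r (f a) (f b)) : Acyclic s :=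
  fun a ha => hr (f a) (ha.lift f hf)

variable {V : Type*} {s : V → V → Prop} {v : V}

theorem Relation.TransGen.restrict_or_through {a b : V} (h : TransGen s a b)
    (ha : a ≠ v) (hb : b ≠ v) :
    TransGen (fun x y : {x // x ≠ v} => s x y) ⟨a, ha⟩ ⟨b, hb⟩ ∨
      (TransGen s a v ∧ TransGen s v b) := by
  induction h with
  | single hab => exact .inl (.single hab)
  | @tail c d hac hcd ih =>
    by_cases hc : c = v
    · subst hc
      exact .inr ⟨hac, .single hcd⟩
    · rcases ih hc with hpath | ⟨hav, hvc⟩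
      · exact .inl (hpath.tail (b := ⟨c, hc⟩) hcd)
      · exact .inr ⟨hav, hvc.tail hcd⟩

theorem Acyclic.of_restrict (hv : ¬ TransGen s v v)
    (hs : Acyclic (fun x y : {x // x ≠ v} => s x y)) : Acyclic s := by
  intro c hc
  by_cases hcv : c = v
  · exact hv (hcv ▸ hc)
  · rcases hc.restrict_or_through hcv hcv with hpath | ⟨hcv', hvc⟩
    · exact hs _ hpath
    · exact hv (hvc.trans hcv')

end Acyclic

section Tournament

variable {V : Type*} {r : V → V → Prop} {v : V}

theorem IsTournament.rel_of_rel_of_rel (hT : IsTournament r)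
    (hv : ∀ a b : V, ¬ (r v a ∧ r a b ∧ r b v)) {a b : V} (hva : r v a) (hab : r a b) :
    r v b := by
  have hbv : b ≠ v := by
    intro hb
    rw [hb] at hab
    exact (hT.2 v a fun h => hT.1 v (h ▸ hva)).mp hva hab
  exact (hT.2 v b hbv.symm).mpr fun hrbv => hv a b ⟨hva, hab, hrbv⟩

theorem IsTournament.not_transGen_self (hT : IsTournament r)
    (hv : ∀ a b : V, ¬ (r v a ∧ r a b ∧ r b v)) {s : V → V → Prop}
    (hsr : ∀ a b, s a b → r a b) : ¬ TransGen s v v := by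
  have reach : ∀ {a b}, TransGen s a b → r v a → r v b := by
    intro a b h
    induction h with
    | single hab => exact fun hva => hT.rel_of_rel_of_rel hv hva (hsr _ _ hab)
    | tail _ hcd ih => exact fun hva => hT.rel_of_rel_of_rel hv (ih hva) (hsr _ _ hcd)
  intro hvv
  obtain ⟨b, hvb, hbv⟩ := TransGen.head'_iff.mp hvv
  rcases reflTransGen_iff_eq_or_transGen.mp hbv with rfl | hbv
  · exact hT.1 _ (hsr _ _ hvb)
  · exact hT.1 v (reach hbv (hsr _ _ hvb))

end Tournament

theorem stmt0_general {V : Type*} (r : V → V → Prop) (hT : IsTournament r)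
    (v : V) (hv : ∀ a b : V, ¬ (r v a ∧ r a b ∧ r b v)) (k : ℕ) :
    (∃ F : Finset (V × V), F.card ≤ k ∧
        Acyclic (fun a b => r a b ∧ (a, b) ∉ F)) ↔
    (∃ F : Finset ({x : V // x ≠ v} × {x : V // x ≠ v}), F.card ≤ k ∧
        Acyclic (fun a b : {x : V // x ≠ v} => r a.1 b.1 ∧ (a, b) ∉ F)) := by
  let e := (Function.Embedding.subtype (· ≠ v)).prodMap (Function.Embedding.subtype (· ≠ v))
  constructor
  · rintro ⟨F, hcard, hF⟩
    refine ⟨F.preimage e e.injective.injOn, ?_, ?_⟩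
    · exact (Finset.card_le_card_of_injOn e (fun _ h => Finset.mem_preimage.mp h)
        e.injective.injOn).trans hcard
    · exact hF.of_map Subtype.val fun a b ⟨hab, hnF⟩ =>
        ⟨hab, fun h => hnF (Finset.mem_preimage.mpr h)⟩
  · rintro ⟨F, hcard, hF⟩
    refine ⟨F.map e, Finset.card_map e ▸ hcard, ?_⟩
    refine Acyclic.of_restrict (hT.not_transGen_self hv fun _ _ h => h.1) ?_
    exact hF.of_map id fun a b ⟨hab, hnF⟩ => ⟨hab, fun h => hnF (Finset.mem_map_of_mem e h)⟩

/-- If a vertex `v` lies in no directed triangle, then `T` has a feedback arc set of size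
at most `k` iff `T - v` has a feedback arc set of size at most `k`. -/
theorem stmt0 {V : Type*} [Fintype V] (r : V → V → Prop) (hT : IsTournament r)
    (v : V) (hv : ∀ a b : V, ¬ (r v a ∧ r a b ∧ r b v)) (k : ℕ) :
    (∃ F : Finset (V × V), F.card ≤ k ∧
        Acyclic (fun a b => r a b ∧ (a, b) ∉ F)) ↔
    (∃ F : Finset ({x : V // x ≠ v} × {x : V // x ≠ v}), F.card ≤ k ∧
        Acyclic (fun a b : {x : V // x ≠ v} => r a.1 b.1 ∧ (a, b) ∉ F)) :=
  stmt0_general r hT v hv k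
end

section
/- Let T be a tournament and uv an arc that lies in more than k distinct directed triangles. Then T has a feedback arc set of size at most k if and only if the tournament obtained by reversing the arc uv has a feedback arc set of size at most k-1. -/
/-!
Given a feedback arc set `F` of `T` with at most `k` arcs, rank the vertices by `f` so that
every arc outside `F` goes up. The arcs that do not go up form a feedback arc set `B ⊆ F`.
If `uv` went up, each directed triangle `v → w → u` would contribute a distinct arc of `B`,
`wu` or `vw`, giving more than `k` arcs in `B`. So `uv` goes down, and after reversing it the
arcs of `B \ {uv}` still form a feedback arc set. Conversely, adding `uv` to a feedback arc
set of the reversed tournament gives one of `T`.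
-/

open Finset

section Ranking

variable {V : Type*}

def deleteArcs (r : V → V → Prop) (F : Finset (V × V)) : V → V → Prop :=
  fun a b => r a b ∧ (a, b) ∉ F

def reverseArc (r : V → V → Prop) (u v : V) : V → V → Prop :=
  fun a b => (r a b ∧ (a, b) ≠ (u, v)) ∨ (a, b) = (v, u)

theorem Acyclic.mono {r s : V → V → Prop} (hrs : r ≤ s) (hs : Acyclic s) : Acyclic r :=
  fun x hx => hs x (Relation.TransGen.mono hrs x x hx)

theorem acyclic_of_forall_lt {α : Type*} [Preorder α] {r : V → V → Prop} (f : V → α)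
    (hf : ∀ a b, r a b → f a < f b) : Acyclic r := by
  intro x hx
  have hlt : Relation.TransGen (· < ·) (f x) (f x) := hx.lift f hf
  rw [Relation.transGen_eq_self] at hlt
  exact lt_irrefl _ hlt

theorem Acyclic.exists_rank [Finite V] {r : V → V → Prop} (hr : Acyclic r) :
    ∃ f : V → ℕ, ∀ a b, r a b → f a < f b := by
  refine ⟨fun x => {w | Relation.TransGen r w x}.ncard, fun a b hab => ?_⟩
  refine Set.ncard_lt_ncard ⟨fun w hw => hw.tail hab, fun hsub => ?_⟩ (Set.toFinite _)
  exact hr a (hsub (Relation.TransGen.single hab))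

section BackArcs

variable [Fintype V] (r : V → V → Prop) (f : V → ℕ)

open Classical in
noncomputable def backArcs : Finset (V × V) :=
  univ.filter fun p => r p.1 p.2 ∧ f p.2 ≤ f p.1

variable {r f}

theorem mem_backArcs {a b : V} : (a, b) ∈ backArcs r f ↔ r a b ∧ f b ≤ f a := by
  simp [backArcs]

theorem backArcs_subset {F : Finset (V × V)} (hF : ∀ a b, deleteArcs r F a b → f a < f b) :
    backArcs r f ⊆ F := by
  rintro ⟨a, b⟩ hab
  rw [mem_backArcs] at hab
  by_contra hnot
  exact absurd (hF a b ⟨hab.1, hnot⟩) (not_lt.mpr hab.2)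

theorem lt_of_notMem_backArcs {a b : V} (hab : r a b) (hnot : (a, b) ∉ backArcs r f) :
    f a < f b :=
  not_le.mp fun hle => hnot (mem_backArcs.mpr ⟨hab, hle⟩)

theorem ncard_triangles_le_card_backArcs (hirr : ∀ x, ¬ r x x) {u v : V} (huv : f u ≤ f v) :
    {w | r v w ∧ r w u}.ncard ≤ (backArcs r f).card := by
  classical
  let g : V → V × V := fun w => if f u ≤ f w then (w, u) else (v, w)
  have hmaps : ∀ w ∈ {w | r v w ∧ r w u}, g w ∈ (backArcs r f : Set (V × V)) := by
    rintro w ⟨hvw, hwu⟩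
    by_cases hw : f u ≤ f w
    · simp only [g, if_pos hw, mem_coe, mem_backArcs]
      exact ⟨hwu, hw⟩
    · simp only [g, if_neg hw, mem_coe, mem_backArcs]
      exact ⟨hvw, (not_le.mp hw).le.trans huv⟩
  have hinj : Set.InjOn g {w | r v w ∧ r w u} := by
    rintro a ⟨hva, -⟩ b ⟨hvb, -⟩ hab
    by_cases ha : f u ≤ f a <;> by_cases hb : f u ≤ f b <;>
      simp only [g, ha, hb, if_true, if_false, Prod.mk.injEq] at hab
    · exact hab.1
    · exact absurd (hab.1 ▸ hva) (hirr v)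
    · exact absurd (hab.1.symm ▸ hvb) (hirr v)
    · exact hab.2
  rw [← Set.ncard_coe_finset]
  exact Set.ncard_le_ncard_of_injOn g hmaps hinj (finite_toSet _)

theorem rank_lt_of_card_backArcs_lt (hirr : ∀ x, ¬ r x x) {u v : V}
    (hcard : (backArcs r f).card < {w | r v w ∧ r w u}.ncard) : f v < f u :=
  not_le.mp fun huv => (ncard_triangles_le_card_backArcs hirr huv).not_gt hcard

open Classical in
theorem acyclic_reverseArc_deleteArcs_erase_backArcs {u v : V} (hvu : f v < f u) :
    Acyclic (deleteArcs (reverseArc r u v) ((backArcs r f).erase (u, v))) := by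
  refine acyclic_of_forall_lt f ?_
  rintro a b ⟨⟨hab, hne⟩ | hab, hnot⟩
  · exact lt_of_notMem_backArcs hab fun hmem => hnot (mem_erase.mpr ⟨hne, hmem⟩)
  · obtain ⟨rfl, rfl⟩ := Prod.mk.inj hab
    exact hvu

end BackArcs

end Ranking

/-- If the arc `uv` lies in more than `k` distinct directed triangles, then `T` has a
feedback arc set of size at most `k` iff the tournament obtained by reversing `uv`
has a feedback arc set of size at most `k - 1`. -/
theorem stmt1 {V : Type*} [Fintype V] (r : V → V → Prop) (hT : IsTournament r)
    (u v : V) (huv : r u v) (k : ℕ)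
    (htri : k < {w : V | r v w ∧ r w u}.ncard) :
    (∃ F : Finset (V × V), F.card ≤ k ∧
        Acyclic (fun a b => r a b ∧ (a, b) ∉ F)) ↔
    (∃ F : Finset (V × V), F.card + 1 ≤ k ∧
        Acyclic (fun a b => ((r a b ∧ (a, b) ≠ (u, v)) ∨ (a, b) = (v, u)) ∧ (a, b) ∉ F)) := by
  classical
  constructor
  · rintro ⟨F, hFk, hF⟩
    obtain ⟨f, hf⟩ := Acyclic.exists_rank hF
    have hBk : (backArcs r f).card ≤ k := (card_le_card (backArcs_subset hf)).trans hFk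
    have hvu : f v < f u := rank_lt_of_card_backArcs_lt hT.1 (hBk.trans_lt htri)
    have huvB : (u, v) ∈ backArcs r f := mem_backArcs.mpr ⟨huv, hvu.le⟩
    refine ⟨(backArcs r f).erase (u, v), ?_, acyclic_reverseArc_deleteArcs_erase_backArcs hvu⟩
    rw [card_erase_add_one huvB]
    exact hBk
  · rintro ⟨F, hFk, hF⟩
    refine ⟨insert (u, v) F, (card_insert_le _ _).trans hFk, hF.mono ?_⟩
    rintro a b ⟨hab, hnot⟩
    rw [mem_insert, not_or] at hnot
    exact ⟨Or.inl ⟨hab, hnot.1⟩, hnot.2⟩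
end

section
/- If an arc uv of a tournament lies in more than k distinct directed triangles, then every feedback arc set of size at most k must contain the arc uv. -/
/-!
Every directed triangle `u → v → w → u` must lose one of its arcs. If `uv` survives, each
triangle through `uv` loses `vw` or `wu`, and these arcs are distinct for distinct `w`: the
arc `vw` ends at `w`, which differs from `u` by irreflexivity, and the arc `wu` starts at `w`.
So there are at most `|F|` such triangles.
-/

theorem Acyclic.mem_or_mem_or_mem_of_triangle {V : Type*} {r : V → V → Prop}
    {F : Finset (V × V)} (hfas : Acyclic fun a b => r a b ∧ (a, b) ∉ F) {u v w : V}
    (huv : r u v) (hvw : r v w) (hwu : r w u) :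
    (u, v) ∈ F ∨ (v, w) ∈ F ∨ (w, u) ∈ F := by
  by_contra! h
  obtain ⟨huvF, hvwF, hwuF⟩ := h
  exact hfas u <| .head ⟨huv, huvF⟩ <| .head ⟨hvw, hvwF⟩ <| .single ⟨hwu, hwuF⟩

theorem ncard_le_card_of_forall_mem_or_mem {V : Type*} (F : Finset (V × V)) {S : Set V}
    {u v : V} (hu : u ∉ S) (hS : ∀ w ∈ S, (v, w) ∈ F ∨ (w, u) ∈ F) :
    S.ncard ≤ F.card := by
  classical
  let arc (w : V) : V × V := if (v, w) ∈ F then (v, w) else (w, u)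
  have hmaps : ∀ w ∈ S, arc w ∈ (F : Set (V × V)) := by
    intro w hw
    by_cases h : (v, w) ∈ F
    · simp [arc, h]
    · simpa [arc, h] using (hS w hw).resolve_left h
  have hinj : Set.InjOn arc S := by
    intro a ha b hb hab
    simp only [arc] at hab
    split_ifs at hab <;> simp only [Prod.mk.injEq] at hab
    · exact hab.2
    · exact absurd (hab.2 ▸ ha) hu
    · exact absurd (hab.2 ▸ hb) hu
    · exact hab.1
  simpa using Set.ncard_le_ncard_of_injOn arc hmaps hinj F.finite_toSet

theorem stmt2_general {V : Type*} (r : V → V → Prop) (hT : IsTournament r)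
    (u v : V) (huv : r u v) (k : ℕ)
    (htri : k < {w : V | r v w ∧ r w u}.ncard)
    (F : Finset (V × V)) (hF : F.card ≤ k)
    (hfas : Acyclic (fun a b => r a b ∧ (a, b) ∉ F)) :
    (u, v) ∈ F := by
  by_contra huvF
  have hu : u ∉ {w : V | r v w ∧ r w u} := fun h => hT.1 u h.2
  have hS : ∀ w ∈ {w : V | r v w ∧ r w u}, (v, w) ∈ F ∨ (w, u) ∈ F := fun w hw =>
    (hfas.mem_or_mem_or_mem_of_triangle huv hw.1 hw.2).resolve_left huvF
  have := ncard_le_card_of_forall_mem_or_mem F hu hS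
  omega

/-- If the arc `uv` lies in more than `k` distinct directed triangles, then every
feedback arc set of size at most `k` contains `uv`. -/
theorem stmt2 {V : Type*} [Fintype V] (r : V → V → Prop) (hT : IsTournament r)
    (u v : V) (huv : r u v) (k : ℕ)
    (htri : k < {w : V | r v w ∧ r w u}.ncard)
    (F : Finset (V × V)) (hF : F.card ≤ k)
    (hfas : Acyclic (fun a b => r a b ∧ (a, b) ∉ F)) :
    (u, v) ∈ F :=
  stmt2_general r hT u v huv k htri F hF hfas
end

section
/- Under the hypotheses of the safe partition lemma (the backward arcs F of D[A_B] can be certified by pairwise arc-disjoint certificates using only arcs of A_B), there exists a minimum-size feedback arc set of D containing all arcs of F. -/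
/-- The minimum size of a feedback arc set of the digraph given by relation `r`. -/
noncomputable def fas {V : Type*} (r : V → V → Prop) : ℕ :=
  sInf {n : ℕ | ∃ F : Finset (V × V), F.card = n ∧
    Acyclic (fun a b => r a b ∧ (a, b) ∉ F)}

/-
A minimum feedback arc set `F₀` must meet the certificate of every backward arc `f ∉ F₀`,
since otherwise `f` closes a cycle with its certificate. The certificates are arc-disjoint, so
this yields an injection from the backward arcs outside `F₀` into `F₀`, landing on forward arcs
between intervals. Trading those forward arcs for the backward arcs gives a set of the same size
containing all backward arcs. It is still a feedback arc set: after deleting it, the interval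
index is nondecreasing along every arc, so a cycle stays inside one interval, where nothing
was traded.
-/

variable {V : Type*}

theorem exists_card_eq_fas [Fintype V] (r : V → V → Prop) :
    ∃ F : Finset (V × V), F.card = fas r ∧ Acyclic (fun a b => r a b ∧ (a, b) ∉ F) := by
  classical
  have hne : {m : ℕ | ∃ F : Finset (V × V), F.card = m ∧
      Acyclic (fun a b => r a b ∧ (a, b) ∉ F)}.Nonempty := by
    refine ⟨_, Finset.univ, rfl, fun v hv => ?_⟩
    cases hv with
    | single h => exact h.2 (Finset.mem_univ _)
    | tail _ h => exact h.2 (Finset.mem_univ _)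
  exact Nat.sInf_mem hne

theorem exists_mem_of_acyclic_of_reflTransGen {r : V → V → Prop} {F : Finset (V × V)}
    (hF : Acyclic (fun a b => r a b ∧ (a, b) ∉ F)) {f : V × V} (hf : r f.1 f.2) (hfF : f ∉ F)
    {P : Set (V × V)} (hP : ∀ e ∈ P, r e.1 e.2)
    (hpath : Relation.ReflTransGen (fun x y => (x, y) ∈ P) f.2 f.1) :
    ∃ e ∈ P, e ∈ F := by
  by_contra! hPF
  have hcycle : Relation.ReflTransGen (fun a b => r a b ∧ (a, b) ∉ F) f.2 f.1 :=
    Relation.ReflTransGen.mono (fun a b hab => ⟨hP _ hab, hPF _ hab⟩) _ _ hpath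
  exact hF f.1 (Relation.TransGen.head' ⟨hf, hfF⟩ hcycle)

theorem exists_subset_card_eq_of_pairwiseDisjoint {ι α : Type*} [DecidableEq α] {S : Finset ι}
    {C : ι → Set α} {F : Finset α} (hhit : ∀ i ∈ S, ∃ e ∈ C i, e ∈ F)
    (hdisj : (S : Set ι).PairwiseDisjoint C) :
    ∃ T ⊆ F, T.card = S.card ∧ ∀ e ∈ T, ∃ i ∈ S, e ∈ C i := by
  choose φ hφC hφF using hhit
  have hinj : Function.Injective fun i : S => φ i i.2 := by
    rintro ⟨i, hi⟩ ⟨j, hj⟩ (hij : φ i hi = φ j hj)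
    exact Subtype.ext <| hdisj.elim hi hj <|
      Set.not_disjoint_iff.mpr ⟨_, hφC i hi, hij ▸ hφC j hj⟩
  refine ⟨S.attach.image fun i : S => φ i i.2, ?_, ?_, ?_⟩
  · rw [Finset.image_subset_iff]
    exact fun i _ => hφF i i.2
  · rw [Finset.card_image_of_injective _ hinj, Finset.card_attach]
  · simp only [Finset.mem_image, Finset.mem_attach, true_and]
    rintro e ⟨⟨i, hi⟩, rfl⟩
    exact ⟨i, hi, hφC i hi⟩

theorem Finset.card_union_sdiff_eq {α : Type*} [DecidableEq α] {B F T : Finset α}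
    (hT : T ⊆ F \ B) (hcard : T.card = (B \ F).card) : (B ∪ (F \ T)).card = F.card := by
  have hTF : T ⊆ F := hT.trans Finset.sdiff_subset
  have hsplit : B ∪ (F \ T) = (B \ F) ∪ (F \ T) := by
    ext x
    have := @hT x
    simp only [Finset.mem_union, Finset.mem_sdiff] at this ⊢
    tauto
  have hdisj : Disjoint (B \ F) (F \ T) :=
    Finset.disjoint_left.mpr fun x hx hx' => (Finset.mem_sdiff.mp hx).2 (Finset.mem_sdiff.mp hx').1
  rw [hsplit, Finset.card_union_of_disjoint hdisj, Finset.card_sdiff_of_subset hTF, ← hcard]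
  have := Finset.card_le_card hTF
  omega

section Potential

variable {ι : Type*} [PartialOrder ι] {r s : V → V → Prop} {p : V → ι}

theorem Relation.TransGen.le_of_le (hle : ∀ a b, r a b → p a ≤ p b) {a b : V}
    (h : Relation.TransGen r a b) : p a ≤ p b := by
  have := h.lift p hle
  rwa [Relation.transGen_eq_self] at this

theorem Relation.TransGen.of_le_of_eq (hle : ∀ a b, r a b → p a ≤ p b)
    (heq : ∀ a b, r a b → p a = p b → s a b) {a b : V} (h : Relation.TransGen r a b)
    (hba : p b ≤ p a) : Relation.TransGen s a b := by
  induction h using Relation.TransGen.head_induction_on with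
  | single hab => exact .single (heq _ _ hab (le_antisymm (hle _ _ hab) hba))
  | head hac hcb ih =>
    have hac_le := hle _ _ hac
    have hcb_le := hcb.le_of_le hle
    exact .head (heq _ _ hac (le_antisymm hac_le (hcb_le.trans hba)))
      (ih (hba.trans hac_le))

theorem Acyclic.of_le_of_eq (hs : Acyclic s) (hle : ∀ a b, r a b → p a ≤ p b)
    (heq : ∀ a b, r a b → p a = p b → s a b) : Acyclic r :=
  fun v hv => hs v (hv.of_le_of_eq hle heq le_rfl)

end Potential

section Partition

variable [LinearOrder V] {ι : Type*}

/-- Membership in the set `F` of the paper. -/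
def IsBackwardCrossArc (r : V → V → Prop) (part : V → ι) (f : V × V) : Prop :=
  r f.1 f.2 ∧ part f.1 ≠ part f.2 ∧ f.2 < f.1

open Classical in
noncomputable def backwardCrossArcs [Fintype V] (r : V → V → Prop) (part : V → ι) :
    Finset (V × V) :=
  Finset.univ.filter (IsBackwardCrossArc r part)

variable {r : V → V → Prop} {part : V → ι}

theorem mem_backwardCrossArcs [Fintype V] {f : V × V} :
    f ∈ backwardCrossArcs r part ↔ IsBackwardCrossArc r part f := by
  simp [backwardCrossArcs]

theorem exists_subset_sdiff_backwardCrossArcs [Fintype V] {F₀ : Finset (V × V)}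
    (hF₀ : Acyclic (fun a b => r a b ∧ (a, b) ∉ F₀)) (C : V × V → Set (V × V))
    (hsub : ∀ f, IsBackwardCrossArc r part f →
      ∀ e ∈ C f, r e.1 e.2 ∧ part e.1 ≠ part e.2 ∧ e.1 < e.2)
    (hpath : ∀ f, IsBackwardCrossArc r part f →
      Relation.ReflTransGen (fun x y => (x, y) ∈ C f) f.2 f.1)
    (hdisj : {f | IsBackwardCrossArc r part f}.PairwiseDisjoint C) :
    ∃ T ⊆ F₀ \ backwardCrossArcs r part, T.card = (backwardCrossArcs r part \ F₀).card ∧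
      ∀ e ∈ T, part e.1 ≠ part e.2 := by
  have hback : ∀ f ∈ backwardCrossArcs r part \ F₀, IsBackwardCrossArc r part f :=
    fun f hf => mem_backwardCrossArcs.mp (Finset.mem_sdiff.mp hf).1
  have hhit : ∀ f ∈ backwardCrossArcs r part \ F₀, ∃ e ∈ C f, e ∈ F₀ := fun f hf =>
    exists_mem_of_acyclic_of_reflTransGen hF₀ (hback f hf).1 (Finset.mem_sdiff.mp hf).2
      (fun e he => (hsub f (hback f hf) e he).1) (hpath f (hback f hf))
  obtain ⟨T, hTF₀, hTcard, hTC⟩ := exists_subset_card_eq_of_pairwiseDisjoint hhit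
    (hdisj.subset hback)
  have hforward : ∀ e ∈ T, ¬IsBackwardCrossArc r part e ∧ part e.1 ≠ part e.2 := by
    intro e he
    obtain ⟨f, hf, hef⟩ := hTC e he
    obtain ⟨-, hpart, hlt⟩ := hsub f (hback f hf) e hef
    exact ⟨fun heB => heB.2.2.asymm hlt, hpart⟩
  refine ⟨T, fun e he => ?_, hTcard, fun e he => (hforward e he).2⟩
  exact Finset.mem_sdiff.mpr ⟨hTF₀ he, mt mem_backwardCrossArcs.mp (hforward e he).1⟩

variable [PartialOrder ι]

theorem acyclic_of_backwardCrossArc_mem (hmono : Monotone part) {F₀ T F : Finset (V × V)}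
    (hF₀ : Acyclic (fun a b => r a b ∧ (a, b) ∉ F₀)) (hT : ∀ e ∈ T, part e.1 ≠ part e.2)
    (hback : ∀ f, IsBackwardCrossArc r part f → f ∈ F) (hF : F₀ \ T ⊆ F) :
    Acyclic (fun a b => r a b ∧ (a, b) ∉ F) := by
  refine hF₀.of_le_of_eq (p := part) ?_ ?_
  · rintro a b ⟨hab, habF⟩
    rcases le_or_gt a b with h | h
    · exact hmono h
    · by_contra hba
      exact habF (hback _ ⟨hab, fun he => hba he.le, h⟩)
  · rintro a b ⟨hab, habF⟩ he
    exact ⟨hab, fun hF₀ab => habF (hF (Finset.mem_sdiff.mpr ⟨hF₀ab, fun hTab => hT _ hTab he⟩))⟩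

theorem exists_card_eq_fas_forall_backwardCrossArc_mem [Fintype V] (hmono : Monotone part)
    (C : V × V → Set (V × V))
    (hsub : ∀ f, IsBackwardCrossArc r part f →
      ∀ e ∈ C f, r e.1 e.2 ∧ part e.1 ≠ part e.2 ∧ e.1 < e.2)
    (hpath : ∀ f, IsBackwardCrossArc r part f →
      Relation.ReflTransGen (fun x y => (x, y) ∈ C f) f.2 f.1)
    (hdisj : {f | IsBackwardCrossArc r part f}.PairwiseDisjoint C) :
    ∃ F : Finset (V × V), F.card = fas r ∧ Acyclic (fun a b => r a b ∧ (a, b) ∉ F) ∧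
      ∀ f, IsBackwardCrossArc r part f → f ∈ F := by
  obtain ⟨F₀, hF₀card, hF₀⟩ := exists_card_eq_fas r
  obtain ⟨T, hT, hTcard, hTcross⟩ :=
    exists_subset_sdiff_backwardCrossArcs hF₀ C hsub hpath hdisj
  have hback : ∀ f, IsBackwardCrossArc r part f → f ∈ backwardCrossArcs r part ∪ (F₀ \ T) :=
    fun f hf => Finset.mem_union_left _ (mem_backwardCrossArcs.mpr hf)
  refine ⟨_, ?_, acyclic_of_backwardCrossArc_mem hmono hF₀ hTcross hback
    Finset.subset_union_right, hback⟩
  rw [Finset.card_union_sdiff_eq hT hTcard, hF₀card]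

end Partition

/-- Under the hypotheses of the safe partition lemma, there is a minimum-size feedback
arc set of `D` containing all backward arcs of `D[A_B]`. -/
theorem stmt7 (n : ℕ) (r : Fin n → Fin n → Prop) (part : Fin n → ℕ)
    (hmono : Monotone part)
    (C : Fin n × Fin n → Set (Fin n × Fin n))
    (hsub : ∀ f : Fin n × Fin n, r f.1 f.2 → part f.1 ≠ part f.2 → f.2 < f.1 →
      C f ⊆ {e : Fin n × Fin n |
        r e.1 e.2 ∧ part e.1 ≠ part e.2 ∧ e.1 < e.2 ∧ f.2 ≤ e.1 ∧ e.2 ≤ f.1})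
    (hpath : ∀ f : Fin n × Fin n, r f.1 f.2 → part f.1 ≠ part f.2 → f.2 < f.1 →
      Relation.ReflTransGen (fun x y => (x, y) ∈ C f) f.2 f.1)
    (hdisj : ∀ f g : Fin n × Fin n, r f.1 f.2 → part f.1 ≠ part f.2 → f.2 < f.1 →
      r g.1 g.2 → part g.1 ≠ part g.2 → g.2 < g.1 → f ≠ g → Disjoint (C f) (C g)) :
    ∃ F : Finset (Fin n × Fin n), F.card = fas r ∧
      Acyclic (fun a b => r a b ∧ (a, b) ∉ F) ∧
      ∀ f : Fin n × Fin n, r f.1 f.2 → part f.1 ≠ part f.2 → f.2 < f.1 → f ∈ F := by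
  obtain ⟨F, hcard, hacyc, hback⟩ := exists_card_eq_fas_forall_backwardCrossArc_mem hmono C
    (fun f ⟨hr, hpart, hlt⟩ e he =>
      let ⟨hr', hpart', hlt', _⟩ := hsub f hr hpart hlt he
      ⟨hr', hpart', hlt'⟩)
    (fun f ⟨hr, hpart, hlt⟩ => hpath f hr hpart hlt)
    (fun f ⟨hfr, hfpart, hflt⟩ g ⟨hgr, hgpart, hglt⟩ =>
      hdisj f g hfr hfpart hflt hgr hgpart hglt)
  exact ⟨F, hcard, hacyc, fun f hr hpart hlt => hback f ⟨hr, hpart, hlt⟩⟩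
end

section
/- Let T be an ordered tournament, M an interval of the ordering that is a transitive module, I the set of in-neighbors of M and O the set of out-neighbors of M, and Z = {uv : u in O, v in I} the set of arcs from O to I. If |Z| <= |M|, then the arcs of Z can be certified by pairwise arc-disjoint certificates, each of the form a directed path v, w, u with w in M for the backward arc uv in Z. -/
/-- If `M` is a transitive module of a tournament with in-neighborhood `I` and
out-neighborhood `O`, and the set `Z` of arcs from `O` to `I` has `|Z| ≤ |M|`, then the
arcs of `Z` can be certified by pairwise arc-disjoint paths `v, w, u` with `w ∈ M`. -/
theorem stmt8 {V : Type*} [Fintype V] (r : V → V → Prop) (hT : IsTournament r)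
    (M : Set V)
    (hmod : ∀ x ∉ M, (∀ m ∈ M, r x m) ∨ (∀ m ∈ M, r m x))
    (htrans : Acyclic (fun a b => r a b ∧ a ∈ M ∧ b ∈ M))
    (I O : Set V)
    (hI : I = {x : V | x ∉ M ∧ ∀ m ∈ M, r x m})
    (hO : O = {x : V | x ∉ M ∧ ∀ m ∈ M, r m x})
    (Z : Set (V × V)) (hZ : Z = {e : V × V | e.1 ∈ O ∧ e.2 ∈ I ∧ r e.1 e.2})
    (hcard : Z.ncard ≤ M.ncard) :
    ∃ f : V × V → V,
      (∀ e ∈ Z, f e ∈ M ∧ r e.2 (f e) ∧ r (f e) e.1) ∧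
      ∀ e ∈ Z, ∀ e' ∈ Z, e ≠ e' →
        ({(e.2, f e), (f e, e.1)} : Set (V × V)) ∩ {(e'.2, f e'), (f e', e'.1)} = ∅ := by
  classical
  have hZfin : Z.Finite := Set.toFinite Z
  have hMfin : M.Finite := Set.toFinite M
  -- get an injection from Z to M
  have hcard' : Fintype.card hZfin.toFinset ≤ Fintype.card hMfin.toFinset := by
    rw [Fintype.card_coe, Fintype.card_coe, ← Set.ncard_eq_toFinset_card,
      ← Set.ncard_eq_toFinset_card]
    exact hcard
  obtain ⟨g⟩ : Nonempty (hZfin.toFinset ↪ hMfin.toFinset) :=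
    Function.Embedding.nonempty_of_card_le hcard'
  set f : V × V → V := fun e =>
    if h : e ∈ Z then (g ⟨e, by simpa using h⟩ : V) else e.1 with hf
  have hfM : ∀ e ∈ Z, f e ∈ M := by
    intro e he
    simp only [hf, dif_pos he]
    have := (g ⟨e, by simpa using he⟩).2
    simpa using this
  have hfinj : ∀ e ∈ Z, ∀ e' ∈ Z, f e = f e' → e = e' := by
    intro e he e' he' hfe
    simp only [hf, dif_pos he, dif_pos he'] at hfe
    have := g.injective (Subtype.ext hfe)
    simpa using congrArg Subtype.val this
  refine ⟨f, ?_, ?_⟩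
  · intro e he
    have heZ := he
    rw [hZ] at heZ
    obtain ⟨h1, h2, h3⟩ := heZ
    rw [hO] at h1; rw [hI] at h2
    exact ⟨hfM e he, h2.2 _ (hfM e he), h1.2 _ (hfM e he)⟩
  · intro e he e' he' hne
    have h1 : e.1 ∈ O ∧ e.2 ∈ I := by rw [hZ] at he; exact ⟨he.1, he.2.1⟩
    have h1' : e'.1 ∈ O ∧ e'.2 ∈ I := by rw [hZ] at he'; exact ⟨he'.1, he'.2.1⟩
    have he2M : e.2 ∉ M := by have := h1.2; rw [hI] at this; exact this.1
    have he2M' : e'.2 ∉ M := by have := h1'.2; rw [hI] at this; exact this.1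
    have he1M : e.1 ∉ M := by have := h1.1; rw [hO] at this; exact this.1
    have he1M' : e'.1 ∉ M := by have := h1'.1; rw [hO] at this; exact this.1
    have hff : f e ≠ f e' := fun h => hne (hfinj e he e' he' h)
    ext x
    simp only [Set.mem_inter_iff, Set.mem_insert_iff, Set.mem_singleton_iff,
      Set.mem_empty_iff_false, iff_false, not_and, Prod.ext_iff]
    rintro (⟨hx1, hx2⟩ | ⟨hx1, hx2⟩) <;> rintro (⟨hy1, hy2⟩ | ⟨hy1, hy2⟩)
    · exact hff (hx2.symm.trans hy2)
    · exact he2M ((hx1.symm.trans hy1) ▸ hfM e' he')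
    · exact he2M' ((hx1.symm.trans hy1) ▸ hfM e he)
    · exact hff (hx1.symm.trans hy1)
end

section
/- Let T be an ordered tournament and S a feedback arc set such that reversing S gives the transitive ordering. If no arc of T lies in more than k directed triangles, then every backward arc e of T (with respect to this ordering) has length l(e) <= 2k+2. -/
/-!
Every vertex `w` strictly between the ends of a backward arc `a → b` either closes the directed
triangle `a → b → w → a`, or sends one of the arcs `w → b`, `a → w` backwards. The map
`w ↦ (w, b)` or `(a, w)` accordingly is injective, so at most `k + |S| ≤ 2k` vertices lie
strictly between `b` and `a`.
-/

section OrderedTournament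

variable {V : Type*} {r : V → V → Prop}

def backwardArcs [LinearOrder V] (r : V → V → Prop) : Set (V × V) :=
  {e | r e.1 e.2 ∧ e.2 < e.1}

open Classical in
noncomputable def backwardWitness (r : V → V → Prop) (a b w : V) : V × V :=
  if r w b then (w, b) else (a, w)

lemma IsTournament.backwardWitness_mem_backwardArcs [LinearOrder V] (hT : IsTournament r)
    {a b w : V} (hw : w ∈ Set.Ioo b a) (hnt : ¬ (r b w ∧ r w a)) :
    backwardWitness r a b w ∈ backwardArcs r := by
  by_cases hwb : r w b
  · simpa [backwardWitness, hwb, backwardArcs] using hw.1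
  · have hbw : r b w := (hT.2 b w hw.1.ne).mpr hwb
    have haw : r a w := (hT.2 a w hw.2.ne').mpr fun hwa ↦ hnt ⟨hbw, hwa⟩
    simpa [backwardWitness, hwb, backwardArcs] using ⟨haw, hw.2⟩

lemma injOn_backwardWitness (r : V → V → Prop) (a b : V) :
    Set.InjOn (backwardWitness r a b) {w | w ≠ a} := by
  intro w₁ hw₁ w₂ hw₂ h
  unfold backwardWitness at h
  split_ifs at h <;> simp_all

lemma IsTournament.ncard_Ioo_le [LinearOrder V] [Finite V] (hT : IsTournament r) (a b : V) :
    (Set.Ioo b a).ncard ≤ {w | r b w ∧ r w a}.ncard + (backwardArcs r).ncard := by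
  set nonTriangle := {w ∈ Set.Ioo b a | ¬ (r b w ∧ r w a)}
  have hsplit : Set.Ioo b a ⊆ {w | r b w ∧ r w a} ∪ nonTriangle := by
    intro w hw
    by_cases h : r b w ∧ r w a
    · exact Or.inl h
    · exact Or.inr ⟨hw, h⟩
  have hnonTriangle : nonTriangle.ncard ≤ (backwardArcs r).ncard :=
    Set.ncard_le_ncard_of_injOn _ (fun w hw ↦ hT.backwardWitness_mem_backwardArcs hw.1 hw.2)
      ((injOn_backwardWitness r a b).mono fun w hw ↦ hw.1.2.ne)
  calc (Set.Ioo b a).ncard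
      ≤ ({w | r b w ∧ r w a} ∪ nonTriangle).ncard := Set.ncard_le_ncard hsplit
    _ ≤ {w | r b w ∧ r w a}.ncard + nonTriangle.ncard := Set.ncard_union_le _ _
    _ ≤ {w | r b w ∧ r w a}.ncard + (backwardArcs r).ncard := by gcongr

end OrderedTournament

lemma Fin.ncard_Ioo_add_two {n : ℕ} {a b : Fin n} (h : a < b) :
    (Set.Ioo a b).ncard + 2 = b - a + 1 := by
  rw [← Finset.coe_Ioo, Set.ncard_coe_finset, Fin.card_Ioo]
  have : (a : ℕ) < b := h
  omega

/-- If the backward arcs of an ordered tournament are exactly a feedback arc set `S` of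
size at most `k` (whose reversal yields the given transitive ordering), and no arc lies
in more than `k` directed triangles, then every backward arc has length at most `2k+2`. -/
theorem stmt9 (n : ℕ) (r : Fin n → Fin n → Prop) (hT : IsTournament r) (k : ℕ)
    (S : Finset (Fin n × Fin n))
    (hS : ∀ a b : Fin n, (a, b) ∈ S ↔ r a b ∧ b < a)
    (hScard : S.card ≤ k)
    (htri : ∀ a b : Fin n, r a b → {w : Fin n | r b w ∧ r w a}.ncard ≤ k) :
    ∀ a b : Fin n, r a b → b < a → (a : ℕ) - b + 1 ≤ 2 * k + 2 := by
  intro a b hab hba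
  have hback : backwardArcs r = ↑S := by
    ext ⟨u, v⟩
    exact (hS u v).symm
  have hbetween := hT.ncard_Ioo_le a b
  rw [hback, Set.ncard_coe_finset] at hbetween
  have htriangles := htri a b hab
  have hlength := Fin.ncard_Ioo_add_two hba
  omega
end

section
/- Let T be an ordered tournament with positive integer weights w on its backward arcs such that every interval I satisfies 2*w(I) <= |I| - 1, where w(I) is the total weight of backward arcs with both endpoints in I. Then for each backward arc f = vu one can choose a collection C(f) of w(f) directed paths from u to v, each using only forward arcs within the span of f, such that all paths over all backward arcs are pairwise arc-disjoint. -/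
/-!
All paths have length two, `u → m → v`. Paths are added one at a time, always for a backward arc
`vu` of minimal span among those still owed paths, keeping the invariant that every interval
`[a, b]` satisfies
`2 · (paths still owed to backward arcs inside it) + (used arcs inside it) ≤ b - a`;
initially this is the hypothesis on `w`.

Take `[a₀, β]` tight (equality in the invariant) with `a₀ ≤ u ≤ β < v` and `β` maximal, and
`[α, b₀]` tight with `u < α ≤ v ≤ b₀` and `α` minimal. A midpoint `m ∈ (β, α)` that cannot be
used is charged to a used arc with endpoint `m`: `um` or `mv` itself, or else the tournament arc
`vm` or `mu` is backward with shorter span, hence already served, and the arc of its path at `m`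
is used. Distinct midpoints get distinct arcs because the paths are arc-disjoint. These arcs lie
in `[a₀, b₀]` but in neither tight interval, so the invariant on `[a₀, b₀]` forces a free midpoint
in `(β, α)`. Adding `u → m → v` keeps the invariant: intervals containing `vu` gain two arcs and
lose two units of demand, and an interval containing exactly one new arc is not tight by the
choice of `β` and `α`.
-/

open Finset

section PairsIn

variable {α : Type*} [LinearOrder α] [LocallyFiniteOrder α]

def pairsIn (a b : α) : Finset (α × α) := Icc a b ×ˢ Icc a b

theorem mem_pairsIn {a b : α} {e : α × α} :
    e ∈ pairsIn a b ↔ a ≤ e.1 ∧ e.1 ≤ b ∧ a ≤ e.2 ∧ e.2 ≤ b := by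
  simp [pairsIn, and_assoc]

theorem pairsIn_eq_empty {a b : α} (h : b < a) : pairsIn a b = ∅ := by
  simp [pairsIn, h]

theorem sum_pairsIn_add_sum_pairsIn_add_sum_le {M : Type*} [AddCommMonoid M] [PartialOrder M]
    [CanonicallyOrderedAdd M] (g : α × α → M) {a a' b b' : α} (ha : a ≤ a') (hb : b ≤ b')
    {X : Finset (α × α)} (hX : X ⊆ pairsIn a b') (hXd : Disjoint X (pairsIn a b ∪ pairsIn a' b')) :
    ∑ e ∈ pairsIn a b, g e + ∑ e ∈ pairsIn a' b', g e + ∑ e ∈ X, g e ≤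
      ∑ e ∈ pairsIn a b', g e + ∑ e ∈ pairsIn a' b, g e := by
  have hinter : pairsIn a b ∩ pairsIn a' b' = pairsIn a' b := by
    ext e
    simp only [mem_inter, mem_pairsIn]
    constructor
    · rintro ⟨h₁, h₂⟩
      exact ⟨h₂.1, h₁.2.1, h₂.2.2.1, h₁.2.2.2⟩
    · rintro ⟨h₁, h₂, h₃, h₄⟩
      exact ⟨⟨ha.trans h₁, h₂, ha.trans h₃, h₄⟩, ⟨h₁, h₂.trans hb, h₃, h₄.trans hb⟩⟩
  have hunion : (pairsIn a b ∪ pairsIn a' b') ∪ X ⊆ pairsIn a b' := by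
    refine union_subset (union_subset ?_ ?_) hX <;> intro e <;> simp only [mem_pairsIn] <;>
      rintro ⟨h₁, h₂, h₃, h₄⟩
    · exact ⟨h₁, h₂.trans hb, h₃, h₄.trans hb⟩
    · exact ⟨ha.trans h₁, h₂, ha.trans h₃, h₄⟩
  rw [← sum_union_inter, hinter, add_right_comm, ← sum_union hXd.symm]
  exact add_le_add_left (sum_le_sum_of_subset hunion) _

end PairsIn

abbrev IsBackward {n : ℕ} (r : Fin n → Fin n → Prop) (e : Fin n × Fin n) : Prop :=
  r e.1 e.2 ∧ e.2 < e.1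

theorem filter_isBackward_pairsIn {n : ℕ} (r : Fin n → Fin n → Prop) [DecidableRel r]
    (a b : Fin n) :
    {e ∈ pairsIn a b | IsBackward r e} =
      univ.filter fun e : Fin n × Fin n => r e.1 e.2 ∧ e.2 < e.1 ∧ a ≤ e.2 ∧ e.1 ≤ b := by
  ext e
  simp only [mem_filter, mem_pairsIn, mem_univ, true_and]
  constructor
  · rintro ⟨⟨-, h₁, h₂, -⟩, hr, hlt⟩
    exact ⟨hr, hlt, h₂, h₁⟩
  · rintro ⟨hr, hlt, h₂, h₁⟩
    exact ⟨⟨h₂.trans hlt.le, h₁, h₂, hlt.le.trans h₁⟩, hr, hlt⟩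

-- For a backward arc `e`, the paths chosen so far are `e.2 → mid e i → e.1` for `i < count e`;
-- `used` contains all their arcs.
structure PartialRouting (n : ℕ) where
  count : Fin n × Fin n → ℕ
  mid : Fin n × Fin n → ℕ → Fin n
  used : Finset (Fin n × Fin n)

namespace PartialRouting

variable {n : ℕ} (R : PartialRouting n) (r : Fin n → Fin n → Prop)

def path (e : Fin n × Fin n) (i : ℕ) : Finset (Fin n × Fin n) :=
  {(e.2, R.mid e i), (R.mid e i, e.1)}

def IsRouted (e : Fin n × Fin n) (i : ℕ) : Prop := IsBackward r e ∧ i < R.count e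

def IsFreeMidpoint (u v m : Fin n) : Prop :=
  r u m ∧ r m v ∧ (u, m) ∉ R.used ∧ (m, v) ∉ R.used

def IsChargedArc (u v m : Fin n) (e : Fin n × Fin n) : Prop :=
  e ∈ R.used ∧ e ∈ pairsIn u v ∧
    (e.1 = m ∧ (e.2 = v ∨ ∃ p i, R.IsRouted r p i ∧ e = (p.2, R.mid p i)) ∨
      e.2 = m ∧ (e.1 = u ∨ ∃ p i, R.IsRouted r p i ∧ e = (R.mid p i, p.1)))

def addPath (f : Fin n × Fin n) (m : Fin n) : PartialRouting n where
  count := Function.update R.count f (R.count f + 1)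
  mid := Function.update R.mid f (Function.update (R.mid f) (R.count f) m)
  used := R.used ∪ {(f.2, m), (m, f.1)}

def empty : PartialRouting n := ⟨fun _ => 0, fun e _ => e.1, ∅⟩

variable {R r} in
theorem IsRouted.of_addPath {f : Fin n × Fin n} {m : Fin n} {e : Fin n × Fin n} {i : ℕ}
    (h : (R.addPath f m).IsRouted r e i) :
    R.IsRouted r e i ∧ (R.addPath f m).mid e i = R.mid e i ∨
      e = f ∧ i = R.count f ∧ (R.addPath f m).mid e i = m := by
  obtain ⟨he, hi⟩ := h
  by_cases hef : e = f
  · subst hef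
    by_cases hie : i = R.count e
    · subst hie
      simp [addPath]
    · have hi' : i < R.count e := by simp [addPath] at hi; omega
      exact Or.inl ⟨⟨he, hi'⟩, by simp [addPath, hie]⟩
  · simp only [addPath, ne_eq, hef, not_false_eq_true, Function.update_of_ne] at hi
    exact Or.inl ⟨⟨he, hi⟩, by simp [addPath, hef]⟩

variable {R r} in
theorem IsChargedArc.fst_eq_or_snd_eq {u v m : Fin n} {e : Fin n × Fin n}
    (h : R.IsChargedArc r u v m e) : e.1 = m ∨ e.2 = m :=
  h.2.2.imp (·.1) (·.1)

theorem reflTransGen_path (f : Fin n × Fin n) (i : ℕ) :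
    Relation.ReflTransGen (fun x y => (x, y) ∈ R.path f i) f.2 f.1 :=
  (Relation.ReflTransGen.single (b := R.mid f i) (by simp [path])).tail (by simp [path])

variable [DecidableRel r] (w : Fin n × Fin n → ℕ)

def demand (e : Fin n × Fin n) : ℕ := if IsBackward r e then w e - R.count e else 0

def weight (e : Fin n × Fin n) : ℕ := 2 * R.demand r w e + if e ∈ R.used then 1 else 0

def load (a b : Fin n) : ℕ := ∑ e ∈ pairsIn a b, R.weight r w e

def totalDemand : ℕ := ∑ e, R.demand r w e

structure Valid : Prop where
  mid_mem : ∀ e i, R.IsRouted r e i →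
    e.2 < R.mid e i ∧ R.mid e i < e.1 ∧ r e.2 (R.mid e i) ∧ r (R.mid e i) e.1
  path_subset : ∀ e i, R.IsRouted r e i → R.path e i ⊆ R.used
  disjoint : ∀ e i f j, R.IsRouted r e i → R.IsRouted r f j → (e, i) ≠ (f, j) →
    Disjoint (R.path e i) (R.path f j)
  load_le : ∀ a b : Fin n, a ≤ b → R.load r w a b + (a : ℕ) ≤ b

variable {R r w}

theorem valid_empty
    (hint : ∀ a b : Fin n, a ≤ b → 2 * ∑ e ∈ pairsIn a b with IsBackward r e, w e + (a : ℕ) ≤ b) :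
    (empty : PartialRouting n).Valid r w := by
  refine ⟨fun e i h => absurd h.2 (by simp [empty]), fun e i h => absurd h.2 (by simp [empty]),
    fun e i _ _ h => absurd h.2 (by simp [empty]), fun a b hab => ?_⟩
  simpa [load, weight, demand, empty, sum_filter, mul_sum] using hint a b hab

theorem Valid.load_self (hR : R.Valid r w) (a : Fin n) : R.load r w a a = 0 := by
  have := hR.load_le a a le_rfl
  omega

theorem Valid.exists_tight_left (hR : R.Valid r w) {u v : Fin n} (huv : u < v) :
    ∃ a₀ β : Fin n, a₀ ≤ u ∧ u ≤ β ∧ β < v ∧ R.load r w a₀ β + (a₀ : ℕ) = β ∧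
      ∀ a b : Fin n, a ≤ u → β < b → b < v → R.load r w a b + (a : ℕ) < b := by
  set S := univ.filter fun b : Fin n => u ≤ b ∧ b < v ∧ ∃ a ≤ u, R.load r w a b + (a : ℕ) = b
  have hu : u ∈ S := by simpa [S, huv] using ⟨u, le_rfl, by rw [hR.load_self, zero_add]⟩
  obtain ⟨huβ, hβv, a₀, ha₀, htight⟩ := (mem_filter.1 (S.max'_mem ⟨u, hu⟩)).2
  refine ⟨a₀, _, ha₀, huβ, hβv, htight, fun a b hau hβb hbv => ?_⟩
  refine lt_of_le_of_ne (hR.load_le a b (hau.trans (huβ.trans hβb.le))) fun heq => ?_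
  have hbS : b ∈ S := by simp only [S, mem_filter, mem_univ, true_and]; exact
    ⟨huβ.trans hβb.le, hbv, a, hau, heq⟩
  exact absurd (S.le_max' b hbS) (not_le.2 hβb)

theorem Valid.exists_tight_right (hR : R.Valid r w) {u v : Fin n} (huv : u < v) :
    ∃ α b₀ : Fin n, u < α ∧ α ≤ v ∧ v ≤ b₀ ∧ R.load r w α b₀ + (α : ℕ) = b₀ ∧
      ∀ a b : Fin n, u < a → a < α → v ≤ b → R.load r w a b + (a : ℕ) < b := by
  set S := univ.filter fun a : Fin n => u < a ∧ a ≤ v ∧ ∃ b, v ≤ b ∧ R.load r w a b + (a : ℕ) = b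
  have hv : v ∈ S := by simpa [S, huv] using ⟨v, le_rfl, by rw [hR.load_self, zero_add]⟩
  obtain ⟨huα, hαv, b₀, hb₀, htight⟩ := (mem_filter.1 (S.min'_mem ⟨v, hv⟩)).2
  refine ⟨_, b₀, huα, hαv, hb₀, htight, fun a b hua haα hvb => ?_⟩
  refine lt_of_le_of_ne (hR.load_le a b ((haα.trans_le hαv).le.trans hvb)) fun heq => ?_
  have haS : a ∈ S := by simp only [S, mem_filter, mem_univ, true_and]; exact
    ⟨hua, (haα.trans_le hαv).le, b, hvb, heq⟩
  exact absurd (S.min'_le a haS) (not_le.2 haα)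

theorem demand_pos_iff {e : Fin n × Fin n} :
    0 < R.demand r w e ↔ IsBackward r e ∧ R.count e < w e := by
  unfold demand
  split_ifs with he
  · exact ⟨fun h => ⟨he, by omega⟩, fun h => by omega⟩
  · simp [he]

theorem weight_addPath {f : Fin n × Fin n} {m : Fin n} (hf : IsBackward r f)
    (hc : R.count f < w f) (hum : f.2 < m) (hmv : m < f.1) (hA : (f.2, m) ∉ R.used)
    (hB : (m, f.1) ∉ R.used) (e : Fin n × Fin n) :
    (R.addPath f m).weight r w e + 2 * (if e = f then 1 else 0) =
      R.weight r w e + (if e = (f.2, m) then 1 else 0) + (if e = (m, f.1) then 1 else 0) := by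
  by_cases hef : e = f
  · subst hef
    have h1 : e ≠ (e.2, m) := fun h => by rw [Prod.ext_iff] at h; simp at h; omega
    have h2 : e ≠ (m, e.1) := fun h => by rw [Prod.ext_iff] at h; simp at h; omega
    simp only [weight, demand, if_pos hf]
    simp [addPath, h1, h2]
    omega
  · by_cases heA : e = (f.2, m)
    · subst heA
      have : (f.2, m) ≠ (m, f.1) := fun h => by rw [Prod.ext_iff] at h; simp at h; omega
      simp [weight, demand, addPath, hef, hA, this]
    · by_cases heB : e = (m, f.1)
      · subst heB
        simp [weight, demand, addPath, hef, hB, heA]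
      · simp [weight, demand, addPath, hef, heA, heB]

theorem load_addPath {f : Fin n × Fin n} {m : Fin n} (hf : IsBackward r f)
    (hc : R.count f < w f) (hum : f.2 < m) (hmv : m < f.1) (hA : (f.2, m) ∉ R.used)
    (hB : (m, f.1) ∉ R.used) (a b : Fin n) :
    (R.addPath f m).load r w a b + 2 * (if f ∈ pairsIn a b then 1 else 0) =
      R.load r w a b + (if (f.2, m) ∈ pairsIn a b then 1 else 0) +
        (if (m, f.1) ∈ pairsIn a b then 1 else 0) := by
  have := sum_congr rfl fun e (_ : e ∈ pairsIn a b) => weight_addPath hf hc hum hmv hA hB e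
  simpa only [load, sum_add_distrib, ← mul_sum, sum_ite_eq'] using this

theorem Valid.addPath (hR : R.Valid r w) {f : Fin n × Fin n} {m : Fin n} (hf : IsBackward r f)
    (hc : R.count f < w f) (hum : f.2 < m) (hmv : m < f.1)
    (hfree : R.IsFreeMidpoint r f.2 f.1 m)
    (hleft : ∀ a b : Fin n, a ≤ f.2 → m ≤ b → b < f.1 → R.load r w a b + (a : ℕ) < b)
    (hright : ∀ a b : Fin n, f.2 < a → a ≤ m → f.1 ≤ b → R.load r w a b + (a : ℕ) < b) :
    (R.addPath f m).Valid r w := by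
  obtain ⟨hrum, hrmv, hA, hB⟩ := hfree
  have hnew : Disjoint R.used {(f.2, m), (m, f.1)} := by simp [hA, hB]
  have hpath : ∀ e i, (R.addPath f m).path e i =
      {(e.2, (R.addPath f m).mid e i), ((R.addPath f m).mid e i, e.1)} := fun _ _ => rfl
  refine ⟨fun e i h => ?_, fun e i h => ?_, fun e i e' j h h' hne => ?_, fun a b hab => ?_⟩
  · rcases h.of_addPath with ⟨h, hmid⟩ | ⟨rfl, -, hmid⟩
    · rw [hmid]; exact hR.mid_mem e i h
    · rw [hmid]; exact ⟨hum, hmv, hrum, hrmv⟩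
  · rcases h.of_addPath with ⟨h, hmid⟩ | ⟨rfl, -, hmid⟩
    · rw [hpath, hmid]; exact (hR.path_subset e i h).trans subset_union_left
    · rw [hpath, hmid]; exact subset_union_right
  · rcases h.of_addPath with ⟨ho, hmid⟩ | ⟨rfl, rfl, hmid⟩ <;>
      rcases h'.of_addPath with ⟨ho', hmid'⟩ | ⟨rfl, rfl, hmid'⟩
    · rw [hpath, hpath, hmid, hmid']; exact hR.disjoint e i e' j ho ho' hne
    · rw [hpath, hpath, hmid, hmid']; exact hnew.mono_left (hR.path_subset e i ho)
    · rw [hpath, hpath, hmid, hmid']; exact (hnew.mono_left (hR.path_subset e' j ho')).symm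
    · exact absurd rfl hne
  · have hload := load_addPath hf hc hum hmv hA hB a b
    have hle := hR.load_le a b hab
    have hslackL := hleft a b
    have hslackR := hright a b
    simp only [mem_pairsIn] at hload
    split_ifs at hload <;> omega

theorem totalDemand_addPath_lt {f : Fin n × Fin n} (hf : IsBackward r f) (hc : R.count f < w f)
    (m : Fin n) : (R.addPath f m).totalDemand r w < R.totalDemand r w := by
  refine sum_lt_sum (fun e _ => ?_) ⟨f, mem_univ f, ?_⟩
  · by_cases hef : e = f
    · subst hef
      simp only [demand, addPath, Function.update_self]
      split_ifs
      omega
    · simp [demand, addPath, hef]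
  · simp only [demand, addPath, Function.update_self, if_pos hf]
    omega

theorem Valid.fst_arc_ne_snd_arc (hR : R.Valid r w) {p q : Fin n × Fin n} {i j : ℕ}
    (hp : R.IsRouted r p i) (hq : R.IsRouted r q j) : (p.2, R.mid p i) ≠ (R.mid q j, q.1) := by
  intro heq
  by_cases hpq : (p, i) = (q, j)
  · obtain ⟨rfl, rfl⟩ := Prod.ext_iff.1 hpq
    have := (hR.mid_mem p i hp).1
    simp only [Prod.ext_iff] at heq
    exact this.ne heq.1
  · have hmem : (p.2, R.mid p i) ∈ R.path p i := by simp [path]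
    exact disjoint_left.1 (hR.disjoint p i q j hp hq hpq) hmem (by simp [path, heq])

theorem Valid.eq_of_isChargedArc (hR : R.Valid r w) {u v m₁ m₂ : Fin n} {e : Fin n × Fin n}
    (h₁ : u < m₁ ∧ m₁ < v) (h₂ : u < m₂ ∧ m₂ < v) (he₁ : R.IsChargedArc r u v m₁ e)
    (he₂ : R.IsChargedArc r u v m₂ e) : m₁ = m₂ := by
  have key : ∀ {m m'}, u < m → m' < v →
      (e.1 = m ∧ (e.2 = v ∨ ∃ p i, R.IsRouted r p i ∧ e = (p.2, R.mid p i))) →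
      (e.2 = m' ∧ (e.1 = u ∨ ∃ q j, R.IsRouted r q j ∧ e = (R.mid q j, q.1))) → False := by
    rintro m m' hum hm'v ⟨h1, hv | ⟨p, i, hp, rfl⟩⟩ ⟨h2, hu | ⟨q, j, hq, hpq⟩⟩
    · exact hm'v.ne (h2.symm.trans hv)
    · exact hm'v.ne (h2.symm.trans hv)
    · exact hum.ne' (h1.symm.trans hu)
    · exact hR.fst_arc_ne_snd_arc hp hq hpq
  rcases he₁.2.2 with h1 | h1 <;> rcases he₂.2.2 with h2 | h2
  · exact h1.1.symm.trans h2.1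
  · exact (key h₁.1 h₂.2 h1 h2).elim
  · exact (key h₂.1 h₁.2 h2 h1).elim
  · exact h1.1.symm.trans h2.1

theorem Valid.exists_isChargedArc (hR : R.Valid r w) (hT : IsTournament r) {u v m : Fin n}
    (hshort : ∀ p, IsBackward r p → (p.1 : ℕ) - p.2 < (v : ℕ) - u → 0 < R.count p)
    (hum : u < m) (hmv : m < v) (hfree : ¬ R.IsFreeMidpoint r u v m) :
    ∃ e, R.IsChargedArc r u v m e := by
  by_cases hA : (u, m) ∈ R.used
  · exact ⟨(u, m), hA, mem_pairsIn.2 (by simp only; omega), Or.inr ⟨rfl, Or.inl rfl⟩⟩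
  by_cases hB : (m, v) ∈ R.used
  · exact ⟨(m, v), hB, mem_pairsIn.2 (by simp only; omega), Or.inl ⟨rfl, Or.inl rfl⟩⟩
  by_cases hrum : r u m
  · have hrvm : r v m := (hT.2 v m hmv.ne').2 fun hrmv => hfree ⟨hrum, hrmv, hA, hB⟩
    have hp : R.IsRouted r (v, m) 0 := ⟨⟨hrvm, hmv⟩, hshort _ ⟨hrvm, hmv⟩ (by simp only; omega)⟩
    have hmid := hR.mid_mem _ _ hp
    refine ⟨(m, R.mid (v, m) 0), hR.path_subset _ _ hp (by simp [path]), ?_,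
      Or.inl ⟨rfl, Or.inr ⟨_, _, hp, rfl⟩⟩⟩
    simp only at hmid
    exact mem_pairsIn.2 (by simp only; omega)
  · have hrmu : r m u := (hT.2 m u hum.ne').2 hrum
    have hp : R.IsRouted r (m, u) 0 := ⟨⟨hrmu, hum⟩, hshort _ ⟨hrmu, hum⟩ (by simp only; omega)⟩
    have hmid := hR.mid_mem _ _ hp
    refine ⟨(R.mid (m, u) 0, m), hR.path_subset _ _ hp (by simp [path]), ?_,
      Or.inr ⟨rfl, Or.inr ⟨_, _, hp, rfl⟩⟩⟩
    simp only at hmid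
    exact mem_pairsIn.2 (by simp only; omega)

theorem Valid.exists_card_le_sum_weight (hR : R.Valid r w) (hT : IsTournament r) {u v : Fin n}
    (hshort : ∀ p, IsBackward r p → (p.1 : ℕ) - p.2 < (v : ℕ) - u → 0 < R.count p)
    {s : Finset (Fin n)} (hs : ∀ m ∈ s, u < m ∧ m < v)
    (hnone : ∀ m ∈ s, ¬ R.IsFreeMidpoint r u v m) :
    ∃ C : Finset (Fin n × Fin n), #s ≤ ∑ e ∈ C, R.weight r w e ∧
      ∀ e ∈ C, e ∈ pairsIn u v ∧ ∃ m ∈ s, e.1 = m ∨ e.2 = m := by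
  have hcharge : ∀ m ∈ s, ∃ e, R.IsChargedArc r u v m e := fun m hm =>
    hR.exists_isChargedArc hT hshort (hs m hm).1 (hs m hm).2 (hnone m hm)
  choose! Φ hΦ using hcharge
  have hinj : Set.InjOn Φ s := fun m₁ h₁ m₂ h₂ heq =>
    hR.eq_of_isChargedArc (hs m₁ h₁) (hs m₂ h₂) (hΦ m₁ h₁) (heq ▸ hΦ m₂ h₂)
  refine ⟨s.image Φ, ?_, fun e he => ?_⟩
  · rw [← card_image_of_injOn hinj, card_eq_sum_ones]
    refine sum_le_sum fun e he => ?_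
    obtain ⟨m, hm, rfl⟩ := mem_image.1 he
    simp [weight, (hΦ m hm).1]
  · obtain ⟨m, hm, rfl⟩ := mem_image.1 he
    exact ⟨(hΦ m hm).2.1, m, hm, (hΦ m hm).fst_eq_or_snd_eq⟩

theorem Valid.load_add_load_add_card_le (hR : R.Valid r w) (hT : IsTournament r) {u v : Fin n}
    (hvu : IsBackward r (v, u)) (hc : R.count (v, u) < w (v, u))
    (hshort : ∀ p, IsBackward r p → (p.1 : ℕ) - p.2 < (v : ℕ) - u → 0 < R.count p)
    {a₀ β α b₀ : Fin n} (ha₀ : a₀ ≤ u) (huβ : u ≤ β) (hβv : β < v) (huα : u < α) (hαv : α ≤ v)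
    (hvb₀ : v ≤ b₀) (hnone : ∀ m ∈ Ioo β α, ¬ R.IsFreeMidpoint r u v m) :
    R.load r w a₀ β + R.load r w α b₀ + 2 + #(Ioo β α) ≤
      R.load r w a₀ b₀ + R.load r w α β := by
  obtain ⟨C, hcard, hC⟩ := hR.exists_card_le_sum_weight hT hshort
    (fun m hm => by have := mem_Ioo.1 hm; omega) hnone
  have hfC : (v, u) ∉ C := fun hf => by
    obtain ⟨-, m, hm, hme⟩ := hC _ hf
    rw [mem_Ioo] at hm
    simp only at hme
    omega
  have hXsub : insert (v, u) C ⊆ pairsIn a₀ b₀ := by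
    refine insert_subset (mem_pairsIn.2 (by simp only; omega)) fun e he => ?_
    have := mem_pairsIn.1 (hC e he).1
    exact mem_pairsIn.2 (by omega)
  have hXdisj : Disjoint (insert (v, u) C) (pairsIn a₀ β ∪ pairsIn α b₀) := by
    rw [disjoint_insert_left, disjoint_left]
    refine ⟨by simp only [mem_union, mem_pairsIn]; omega, fun e he => ?_⟩
    obtain ⟨-, m, hm, hme⟩ := hC e he
    rw [mem_Ioo] at hm
    simp only [mem_union, mem_pairsIn]
    omega
  have hXweight : 2 + #(Ioo β α) ≤ ∑ e ∈ insert (v, u) C, R.weight r w e := by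
    rw [sum_insert hfC]
    refine add_le_add ?_ hcard
    simp only [weight, demand, if_pos hvu]
    omega
  have := sum_pairsIn_add_sum_pairsIn_add_sum_le (R.weight r w) (ha₀.trans huα.le)
    (hβv.le.trans hvb₀) hXsub hXdisj
  simp only [load]
  omega

theorem Valid.exists_isFreeMidpoint (hR : R.Valid r w) (hT : IsTournament r) {u v : Fin n}
    (hvu : IsBackward r (v, u)) (hc : R.count (v, u) < w (v, u))
    (hshort : ∀ p, IsBackward r p → (p.1 : ℕ) - p.2 < (v : ℕ) - u → 0 < R.count p) :
    ∃ m, u < m ∧ m < v ∧ R.IsFreeMidpoint r u v m ∧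
      (∀ a b : Fin n, a ≤ u → m ≤ b → b < v → R.load r w a b + (a : ℕ) < b) ∧
      (∀ a b : Fin n, u < a → a ≤ m → v ≤ b → R.load r w a b + (a : ℕ) < b) := by
  have huv : u < v := hvu.2
  obtain ⟨a₀, β, ha₀, huβ, hβv, hβ, hβmax⟩ := hR.exists_tight_left huv
  obtain ⟨α, b₀, huα, hαv, hvb₀, hα, hαmin⟩ := hR.exists_tight_right huv
  obtain ⟨m, hm, hfree⟩ : ∃ m ∈ Ioo β α, R.IsFreeMidpoint r u v m := by
    by_contra! hnone
    have key := hR.load_add_load_add_card_le hT hvu hc hshort ha₀ huβ hβv huα hαv hvb₀ hnone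
    have hJ := hR.load_le a₀ b₀ (by omega)
    rcases le_or_gt α β with hαβ | hβα
    · have := hR.load_le α β hαβ
      omega
    · have hempty : R.load r w α β = 0 := by simp [load, pairsIn_eq_empty hβα]
      rw [Fin.card_Ioo] at key
      omega
  rw [mem_Ioo] at hm
  exact ⟨m, by omega, by omega, hfree,
    fun a b hau hmb hbv => hβmax a b hau (hm.1.trans_le hmb) hbv,
    fun a b hua ham hvb => hαmin a b hua (ham.trans_lt hm.2) hvb⟩

theorem Valid.exists_totalDemand_lt (hR : R.Valid r w) (hT : IsTournament r)
    (hw : ∀ e, IsBackward r e → 1 ≤ w e) (hpos : 0 < R.totalDemand r w) :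
    ∃ R' : PartialRouting n, R'.Valid r w ∧ R'.totalDemand r w < R.totalDemand r w := by
  obtain ⟨⟨v, u⟩, hf, hmin⟩ := exists_min_image {e | 0 < R.demand r w e}
    (fun e => (e.1 : ℕ) - e.2) (by
      obtain ⟨e, -, he⟩ := sum_pos_iff.1 hpos
      exact ⟨e, by simpa using he⟩)
  obtain ⟨hvu, hc⟩ := demand_pos_iff.1 (mem_filter.1 hf).2
  have hshort : ∀ p, IsBackward r p → (p.1 : ℕ) - p.2 < (v : ℕ) - u → 0 < R.count p := by
    intro p hp hlt
    by_contra! h0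
    have : 0 < R.demand r w p := demand_pos_iff.2 ⟨hp, by have := hw p hp; omega⟩
    exact absurd (hmin p (by simpa using this)) (not_le.2 hlt)
  obtain ⟨m, hum, hmv, hfree, hleft, hright⟩ := hR.exists_isFreeMidpoint hT hvu hc hshort
  exact ⟨_, hR.addPath hvu hc hum hmv hfree hleft hright, totalDemand_addPath_lt hvu hc m⟩

theorem Valid.exists_totalDemand_eq_zero (hR : R.Valid r w) (hT : IsTournament r)
    (hw : ∀ e, IsBackward r e → 1 ≤ w e) :
    ∃ R' : PartialRouting n, R'.Valid r w ∧ R'.totalDemand r w = 0 := by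
  induction hk : R.totalDemand r w using Nat.strong_induction_on generalizing R with
  | _ k ih =>
    rcases Nat.eq_zero_or_pos k with rfl | hpos
    · exact ⟨R, hR, hk⟩
    · obtain ⟨R', hR', hlt⟩ := hR.exists_totalDemand_lt hT hw (hk ▸ hpos)
      exact ih _ (hk ▸ hlt) hR' rfl

theorem IsRouted.of_totalDemand_eq_zero (h : R.totalDemand r w = 0) {e : Fin n × Fin n} {i : ℕ}
    (he : IsBackward r e) (hi : i < w e) : R.IsRouted r e i := by
  have := sum_eq_zero_iff.1 h e (mem_univ e)
  simp only [demand, if_pos he] at this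
  exact ⟨he, by omega⟩

theorem Valid.mem_path (hR : R.Valid r w) {f : Fin n × Fin n} {i : ℕ} (h : R.IsRouted r f i)
    {e : Fin n × Fin n} (he : e ∈ R.path f i) : r e.1 e.2 ∧ e.1 < e.2 ∧ f.2 ≤ e.1 ∧ e.2 ≤ f.1 := by
  obtain ⟨h1, h2, h3, h4⟩ := hR.mid_mem f i h
  simp only [path, mem_insert, mem_singleton] at he
  rcases he with rfl | rfl
  · exact ⟨h3, h1, le_rfl, h2.le⟩
  · exact ⟨h4, h2, h1.le, le_rfl⟩

end PartialRouting

/-- If an ordered tournament has positive integer weights on its backward arcs with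
`2·w(I) ≤ |I| - 1` for every interval `I`, then every backward arc `f = vu` can be
assigned `w(f)` directed paths from `u` to `v` of forward arcs within the span of `f`,
all paths over all backward arcs being pairwise arc-disjoint. -/
theorem stmt13 (n : ℕ) (r : Fin n → Fin n → Prop) [DecidableRel r]
    (hT : IsTournament r) (w : Fin n × Fin n → ℕ)
    (hw : ∀ e : Fin n × Fin n, r e.1 e.2 → e.2 < e.1 → 1 ≤ w e)
    (hint : ∀ a b : Fin n, a ≤ b →
      2 * ∑ e ∈ Finset.univ.filter
            (fun e : Fin n × Fin n => r e.1 e.2 ∧ e.2 < e.1 ∧ a ≤ e.2 ∧ e.1 ≤ b), w e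
        ≤ (b : ℕ) - (a : ℕ)) :
    ∃ P : Fin n × Fin n → ℕ → Set (Fin n × Fin n),
      (∀ f : Fin n × Fin n, r f.1 f.2 → f.2 < f.1 → ∀ i < w f,
        P f i ⊆ {e : Fin n × Fin n |
          r e.1 e.2 ∧ e.1 < e.2 ∧ f.2 ≤ e.1 ∧ e.2 ≤ f.1} ∧
        Relation.ReflTransGen (fun x y => (x, y) ∈ P f i) f.2 f.1) ∧
      (∀ f g : Fin n × Fin n, r f.1 f.2 → f.2 < f.1 → r g.1 g.2 → g.2 < g.1 →
        ∀ i < w f, ∀ j < w g, (f, i) ≠ (g, j) → Disjoint (P f i) (P g j)) := by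
  have hempty : (PartialRouting.empty : PartialRouting n).Valid r w := by
    refine PartialRouting.valid_empty fun a b hab => ?_
    have := hint a b hab
    rw [filter_isBackward_pairsIn]
    omega
  obtain ⟨R, hR, h0⟩ := hempty.exists_totalDemand_eq_zero hT fun e he => hw e he.1 he.2
  have hrouted : ∀ f i, r f.1 f.2 → f.2 < f.1 → i < w f → R.IsRouted r f i :=
    fun f i hr hlt hi => .of_totalDemand_eq_zero h0 ⟨hr, hlt⟩ hi
  refine ⟨fun f i => R.path f i, fun f hr hlt i hi => ?_, fun f g hfr hf hgr hg i hi j hj hne => ?_⟩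
  · exact ⟨fun e he => hR.mem_path (hrouted f i hr hlt hi) he, R.reflTransGen_path f i⟩
  · exact disjoint_coe.2 (hR.disjoint f i g j (hrouted f i hfr hf hi) (hrouted g j hgr hg hj) hne)
end
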